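/- (3-star implies 6-star) Let L be a real number. If the set {λ ∈ E₁ : |λ| = L} has exactly 3 elements, then the set {Λ ∈ E₀ : |Λ| = 3L} has exactly 6 elements. -/

import Mathlib

noncomputable def ω : ℂ := (1 + Real.sqrt 3 * Complex.I) / 2

noncomputable def φ : ℂ := -(1 + ω) / 3

noncomputable def E (j : ℕ) : Set ℂ := {z | ∃ n m : ℤ, z = (n : ℂ) + (m : ℂ) * ω + (j : ℂ) * φ}

/-!
Multiplying by 3 maps `E 1` onto the points `x + y ω` of `E 0` with `x ≡ y ≡ 2 (mod 3)`, and these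
have norm form `x² + x y + y² ≡ 3 (mod 9)`. Conversely, a solution of `x² + x y + y² ≡ 3 (mod 9)`
has `x ≡ y ≡ 1` or `x ≡ y ≡ 2 (mod 3)`. So once the circle `|λ| = L` meets `E 1`, the circle
`|Λ| = 3 L` in `E 0` is the union of its images under `z ↦ 3 z` and `z ↦ -3 z`, which are disjoint
because `E 1 ∩ -E 1 = ∅`. Hence it has twice as many points.
-/

open Complex

lemma ω_re : ω.re = 1 / 2 := by simp [ω]

lemma ω_im : ω.im = Real.sqrt 3 / 2 := by simp [ω]

lemma normSq_add_mul_ω (x y : ℝ) : normSq (x + y * ω) = x ^ 2 + x * y + y ^ 2 := by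
  have h3 : Real.sqrt 3 ^ 2 = 3 := Real.sq_sqrt (by norm_num)
  simp only [normSq_apply, add_re, add_im, mul_re, mul_im, ofReal_re, ofReal_im, ω_re, ω_im]
  linear_combination (y ^ 2 / 4) * h3

lemma norm_sq_add_mul_ω (x y : ℤ) :
    ‖(x : ℂ) + y * ω‖ ^ 2 = ((x ^ 2 + x * y + y ^ 2 : ℤ) : ℝ) := by
  rw [Complex.sq_norm]
  push_cast
  exact_mod_cast normSq_add_mul_ω x y

lemma eq_zero_of_add_mul_ω_eq_zero {x y : ℤ} (h : (x : ℂ) + y * ω = 0) : x = 0 ∧ y = 0 := by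
  have him := congrArg im h
  have hre := congrArg re h
  simp [ω_re, ω_im] at him hre
  exact ⟨by simpa [him] using hre, him⟩

lemma mem_E_zero {w : ℂ} : w ∈ E 0 ↔ ∃ x y : ℤ, w = x + y * ω := by
  simp [E]

lemma mem_E_one {z : ℂ} :
    z ∈ E 1 ↔ ∃ a b : ℤ, 3 * z = ((3 * a - 1 : ℤ) : ℂ) + ((3 * b - 1 : ℤ) : ℂ) * ω := by
  constructor
  · rintro ⟨a, b, rfl⟩
    exact ⟨a, b, by simp only [φ]; push_cast; ring⟩
  · rintro ⟨a, b, h⟩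
    refine ⟨a, b, ?_⟩
    simp only [φ]
    push_cast at h ⊢
    linear_combination h / 3

lemma emod_three_of_sq_add_mul_add_sq_emod_nine (x y : ℤ) (h : (x ^ 2 + x * y + y ^ 2) % 9 = 3) :
    (x % 3 = 2 ∧ y % 3 = 2) ∨ (x % 3 = 1 ∧ y % 3 = 1) := by
  have key : ∀ a b : ZMod 9, a ^ 2 + a * b + b ^ 2 = 3 →
      (a.val % 3 = 2 ∧ b.val % 3 = 2) ∨ (a.val % 3 = 1 ∧ b.val % 3 = 1) := by decide
  have hdvd : ((x ^ 2 + x * y + y ^ 2 - 3 : ℤ) : ZMod 9) = 0 :=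
    (ZMod.intCast_zmod_eq_zero_iff_dvd _ 9).mpr (by omega)
  push_cast at hdvd
  have hx := ZMod.val_intCast (n := 9) x
  have hy := ZMod.val_intCast (n := 9) y
  have := key x y (by linear_combination hdvd)
  omega

lemma three_mul_mem_E_zero {z : ℂ} (hz : z ∈ E 1) : 3 * z ∈ E 0 := by
  obtain ⟨a, b, h⟩ := mem_E_one.mp hz
  exact mem_E_zero.mpr ⟨_, _, h⟩

lemma neg_mem_E_zero {w : ℂ} (hw : w ∈ E 0) : -w ∈ E 0 := by
  obtain ⟨x, y, rfl⟩ := mem_E_zero.mp hw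
  exact mem_E_zero.mpr ⟨-x, -y, by push_cast; ring⟩

lemma neg_notMem_E_one {z : ℂ} (hz : z ∈ E 1) : -z ∉ E 1 := by
  intro hz'
  obtain ⟨a, b, h⟩ := mem_E_one.mp hz
  obtain ⟨c, d, h'⟩ := mem_E_one.mp hz'
  have hsum : ((3 * (a + c) - 2 : ℤ) : ℂ) + ((3 * (b + d) - 2 : ℤ) : ℂ) * ω = 0 := by
    push_cast at h h' ⊢
    linear_combination -h - h'
  have := (eq_zero_of_add_mul_ω_eq_zero hsum).1
  omega

lemma exists_mem_E_one_eq_three_mul_or_neg {w z₀ : ℂ} (hw : w ∈ E 0) (hz₀ : z₀ ∈ E 1)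
    (hnorm : ‖w‖ = ‖3 * z₀‖) : ∃ z ∈ E 1, w = 3 * z ∨ w = -3 * z := by
  obtain ⟨x, y, rfl⟩ := mem_E_zero.mp hw
  obtain ⟨a, b, h₀⟩ := mem_E_one.mp hz₀
  have hxy : x ^ 2 + x * y + y ^ 2 =
      (3 * a - 1) ^ 2 + (3 * a - 1) * (3 * b - 1) + (3 * b - 1) ^ 2 := by
    have := congrArg (· ^ 2) hnorm
    simp only [h₀, norm_sq_add_mul_ω] at this
    exact_mod_cast this
  have hmod : (x ^ 2 + x * y + y ^ 2) % 9 = 3 := by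
    rw [hxy, show (3 * a - 1) ^ 2 + (3 * a - 1) * (3 * b - 1) + (3 * b - 1) ^ 2
      = 9 * (a ^ 2 + a * b + b ^ 2 - a - b) + 3 by ring]
    omega
  rcases emod_three_of_sq_add_mul_add_sq_emod_nine x y hmod with ⟨hx, hy⟩ | ⟨hx, hy⟩
  · refine ⟨(x + y * ω) / 3, mem_E_one.mpr ⟨(x + 1) / 3, (y + 1) / 3, ?_⟩, Or.inl (by ring)⟩
    rw [show 3 * ((x + 1) / 3) - 1 = x by omega, show 3 * ((y + 1) / 3) - 1 = y by omega]
    ring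
  · refine ⟨-(x + y * ω) / 3, mem_E_one.mpr ⟨(1 - x) / 3, (1 - y) / 3, ?_⟩, Or.inr (by ring)⟩
    rw [show 3 * ((1 - x) / 3) - 1 = -x by omega, show 3 * ((1 - y) / 3) - 1 = -y by omega]
    push_cast
    ring

lemma sphere_E_zero_eq_union {L : ℝ} {z₀ : ℂ} (hz₀ : z₀ ∈ E 1) (hz₀L : ‖z₀‖ = L) :
    {w ∈ E 0 | ‖w‖ = 3 * L} =
      (3 * ·) '' {z ∈ E 1 | ‖z‖ = L} ∪ (-3 * ·) '' {z ∈ E 1 | ‖z‖ = L} := by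
  ext w
  simp only [Set.mem_union, Set.mem_image, Set.mem_ofPred_eq]
  constructor
  · rintro ⟨hw, hwL⟩
    obtain ⟨z, hz, rfl | rfl⟩ := exists_mem_E_one_eq_three_mul_or_neg hw hz₀ (by simp [hwL, hz₀L])
    · exact Or.inl ⟨z, ⟨hz, by simpa using hwL⟩, rfl⟩
    · exact Or.inr ⟨z, ⟨hz, by simpa using hwL⟩, rfl⟩
  · rintro (⟨z, ⟨hz, rfl⟩, rfl⟩ | ⟨z, ⟨hz, rfl⟩, rfl⟩)
    · exact ⟨three_mul_mem_E_zero hz, by simp⟩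
    · exact ⟨by simpa using neg_mem_E_zero (three_mul_mem_E_zero hz), by simp⟩

lemma encard_sphere_E_zero {L : ℝ} {z₀ : ℂ} (hz₀ : z₀ ∈ E 1) (hz₀L : ‖z₀‖ = L) :
    {w ∈ E 0 | ‖w‖ = 3 * L}.encard = 2 * {z ∈ E 1 | ‖z‖ = L}.encard := by
  have hdisj : Disjoint ((3 * ·) '' {z ∈ E 1 | ‖z‖ = L}) ((-3 * ·) '' {z ∈ E 1 | ‖z‖ = L}) := by
    rw [Set.disjoint_left]
    rintro - ⟨z, ⟨hz, -⟩, rfl⟩ ⟨z', ⟨hz', -⟩, hzz'⟩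
    have : -z' = z := by linear_combination hzz' / 3
    exact neg_notMem_E_one hz' (this ▸ hz)
  rw [sphere_E_zero_eq_union hz₀ hz₀L, Set.encard_union_eq hdisj,
    (mul_right_injective₀ (by norm_num : (3 : ℂ) ≠ 0)).encard_image,
    (mul_right_injective₀ (by norm_num : (-3 : ℂ) ≠ 0)).encard_image, two_mul]

theorem three_star_implies_six_star (L : ℝ)
    (h : Set.ncard {z ∈ E 1 | ‖z‖ = L} = 3) :
    Set.ncard {z ∈ E 0 | ‖z‖ = 3 * L} = 6 := by
  have hne : Set.ncard {z ∈ E 1 | ‖z‖ = L} ≠ 0 := by omega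
  obtain ⟨z₀, hz₀, hz₀L⟩ := Set.nonempty_of_ncard_ne_zero hne
  have hA : {z ∈ E 1 | ‖z‖ = L}.encard = 3 := by
    rw [← (Set.finite_of_ncard_ne_zero hne).cast_ncard_eq, h]
    rfl
  rw [Set.ncard_def, encard_sphere_E_zero hz₀ hz₀L, hA]
  rfl
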